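/- arXiv:1701.06152 — 2 statements merged into one kernel-verified Lean document; each statement's English description precedes it below -/
import Mathlib

section
/- In a graded connected unital shuffle algebra, for any element x of positive degree, the left half-shuffle exponential X := exp^≺(x) = 1 + Σ_{n>0} x^{≺n} and the right half-shuffle exponential Y := exp^≻(−x) = 1 + Σ_{n>0} (−x)^{≻n} satisfy Y ⧢ X = X ⧢ Y = 1; in particular Y is the shuffle-inverse of X. -/
/-- A shuffle (dendriform) algebra over a field `k`: a `k`-vector space `D` with two
bilinear half-shuffle products `≺` (`prec`) and `≻` (`succ`) satisfying
`(a ≺ b) ≺ c = a ≺ (b ⧢ c)`, `(a ≻ b) ≺ c = a ≻ (b ≺ c)`, `a ≻ (b ≻ c) = (a ⧢ b) ≻ c`,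
where `a ⧢ b := a ≺ b + a ≻ b`. -/
class ShuffleAlgebra (k : Type*) (D : Type*) [Field k] [AddCommGroup D] [Module k D] where
  prec : D →ₗ[k] D →ₗ[k] D
  succ : D →ₗ[k] D →ₗ[k] D
  prec_prec : ∀ a b c : D, prec (prec a b) c = prec a (prec b c + succ b c)
  succ_prec : ∀ a b c : D, prec (succ a b) c = succ a (prec b c)
  succ_succ : ∀ a b c : D, succ a (succ b c) = succ (prec a b + succ a b) c

variable (k : Type*) {D : Type*} [Field k] [AddCommGroup D] [Module k D] [ShuffleAlgebra k D]

/-- The left half-shuffle product `a ≺ b`. -/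
def hsPrec (a b : D) : D := ShuffleAlgebra.prec (k := k) a b

/-- The right half-shuffle product `a ≻ b`. -/
def hsSucc (a b : D) : D := ShuffleAlgebra.succ (k := k) a b

/-- The shuffle product `a ⧢ b := a ≺ b + a ≻ b`. -/
def hsShuffle (a b : D) : D := hsPrec k a b + hsSucc k a b

/-!
Formal-series model of a graded connected unital shuffle algebra (cf. the paper, which
works "with formal series expansions ... insuring convergence in the formal sense"):
the positive-degree part is the space `ℕ → D` of formal series
`x = Σ_{n ≥ 0} xₙ t^{n+1}` with coefficients in a shuffle algebra `D` (the coefficient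
`x n` sits in degree `n + 1`, so there is no degree-zero component), and the unital
augmentation is `k × (ℕ → D) = k·1 ⊕ (ℕ → D)`, with the unit conventions
`a ≺ 1 = a = 1 ≻ a`, `1 ≺ a = 0 = a ≻ 1`, `1 ⧢ 1 = 1`.
All infinite sums are finite in each degree.
-/

/-- `≺` on positive-degree formal series. -/
def cprec (x y : ℕ → D) : ℕ → D := fun n =>
  match n with
  | 0 => 0
  | n + 1 => ∑ p ∈ Finset.HasAntidiagonal.antidiagonal n, hsPrec k (x p.1) (y p.2)

/-- `≻` on positive-degree formal series. -/
def csucc (x y : ℕ → D) : ℕ → D := fun n =>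
  match n with
  | 0 => 0
  | n + 1 => ∑ p ∈ Finset.HasAntidiagonal.antidiagonal n, hsSucc k (x p.1) (y p.2)

/-- `⧢` on positive-degree formal series. -/
def csh (x y : ℕ → D) : ℕ → D := cprec k x y + csucc k x y

/-- The unit `1` of the unital augmentation `k·1 ⊕ (ℕ → D)`. -/
def uone : k × (ℕ → D) := (1, 0)

/-- The inclusion of the positive-degree part into the unital augmentation. -/
def uinj (a : ℕ → D) : k × (ℕ → D) := (0, a)

/-- The shuffle product `⧢` on the unital augmentation (using `1 ⧢ X = X = X ⧢ 1`). -/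
def ush (X Y : k × (ℕ → D)) : k × (ℕ → D) :=
  (X.1 * Y.1, X.1 • Y.2 + Y.1 • X.2 + csh k X.2 Y.2)

/-- `a ≺ X` for `a` of positive degree and `X` in the unital augmentation
(using `a ≺ 1 = a`). -/
def uprec (a : ℕ → D) (X : k × (ℕ → D)) : ℕ → D := X.1 • a + cprec k a X.2

/-- `X ≻ a` for `a` of positive degree and `X` in the unital augmentation
(using `1 ≻ a = a`). -/
def usucc (X : k × (ℕ → D)) (a : ℕ → D) : ℕ → D := X.1 • a + csucc k X.2 a

/-- `a^{≺(m+1)}`, i.e. `precPow k a m = a^{≺(m+1)}` (and `a^{≺0} = 1`). -/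
def precPow (a : ℕ → D) : ℕ → (ℕ → D)
  | 0 => a
  | m + 1 => cprec k a (precPow a m)

/-- `a^{≻(m+1)}`. -/
def succPow (a : ℕ → D) : ℕ → (ℕ → D)
  | 0 => a
  | m + 1 => csucc k (succPow a m) a

/-- `a^{⧢(m+1)}`. -/
def shPow (a : ℕ → D) : ℕ → (ℕ → D)
  | 0 => a
  | m + 1 => csh k a (shPow a m)

/-- The left half-shuffle exponential `exp^≺(a) = 1 + Σ_{n>0} a^{≺n}`
(the sum is finite in each degree). -/
def expPrec (a : ℕ → D) : k × (ℕ → D) :=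
  (1, fun n => ∑ m ∈ Finset.range (n + 1), precPow k a m n)

/-- The right half-shuffle exponential `exp^≻(a) = 1 + Σ_{n>0} a^{≻n}`. -/
def expSucc (a : ℕ → D) : k × (ℕ → D) :=
  (1, fun n => ∑ m ∈ Finset.range (n + 1), succPow k a m n)

/-- The shuffle exponential `exp^⧢(a) = 1 + Σ_{n>0} a^{⧢n}/n!`. -/
noncomputable def expSh (a : ℕ → D) : k × (ℕ → D) :=
  (1, fun n => ∑ m ∈ Finset.range (n + 1), (((m + 1).factorial : k))⁻¹ • shPow k a m n)


/-!
Write `exp^≺(x) = 1 + X` and `exp^≻(-x) = 1 + Y`; these are characterised by `X = x + x ≺ X` and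
`Y = -x - Y ≻ x`. With `(a ≻ b) ≺ c = a ≻ (b ≺ c)` they give `Y ≺ X = -X - Y - Y ≻ X`, that is
`X + Y + Y ⧢ X = 0`, which says `exp^≻(-x) ⧢ exp^≺(x) = 1`. In the other order, the two remaining
axioms show that `W = X + Y + X ⧢ Y` solves the homogeneous equation `W = x ≺ W - W ≻ x`. Since `x`
has positive degree, the right-hand side in each degree only involves lower degrees of `W`, so
`W = 0`. The series `ℕ → D` themselves form a shuffle algebra, and only this last step uses the
grading.
-/

open Finset

theorem Finset.Nat.sum_antidiagonal_antidiagonal_assoc {β : Type*} [AddCommMonoid β]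
    (n : ℕ) (F : ℕ → ℕ → ℕ → β) :
    ∑ p ∈ antidiagonal n, ∑ q ∈ antidiagonal p.1, F q.1 q.2 p.2 =
      ∑ p ∈ antidiagonal n, ∑ q ∈ antidiagonal p.2, F p.1 q.1 q.2 := by
  simp only [sum_sigma']
  apply sum_nbij' (fun ⟨⟨_, l⟩, ⟨i, j⟩⟩ ↦ ⟨(i, j + l), (j, l)⟩)
    (fun ⟨⟨i, _⟩, ⟨j, l⟩⟩ ↦ ⟨(i + j, l), (i, j)⟩) <;> aesop (add simp [add_assoc])

section PosConv

variable {R M N P Q T U : Type*} [CommSemiring R] [AddCommMonoid M] [AddCommMonoid N]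
  [AddCommMonoid P] [AddCommMonoid Q] [AddCommMonoid T] [AddCommMonoid U] [Module R M]
  [Module R N] [Module R P] [Module R Q] [Module R T] [Module R U]

/-- The product of positive-degree series induced by `f`; coefficient `n` sits in degree `n + 1`,
whence the shift of indices. -/
def posConv (f : M →ₗ[R] N →ₗ[R] P) : (ℕ → M) →ₗ[R] (ℕ → N) →ₗ[R] ℕ → P :=
  LinearMap.mk₂ R
    (fun x y n => match n with
      | 0 => 0
      | n + 1 => ∑ p ∈ antidiagonal n, f (x p.1) (y p.2))
    (fun _ _ _ => by funext n; cases n <;> simp [sum_add_distrib])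
    (fun _ _ _ => by funext n; cases n <;> simp [smul_sum])
    (fun _ _ _ => by funext n; cases n <;> simp [sum_add_distrib])
    (fun _ _ _ => by funext n; cases n <;> simp [smul_sum])

@[simp]
theorem posConv_apply_zero (f : M →ₗ[R] N →ₗ[R] P) (x : ℕ → M) (y : ℕ → N) :
    posConv f x y 0 = 0 := rfl

@[simp]
theorem posConv_apply_succ (f : M →ₗ[R] N →ₗ[R] P) (x : ℕ → M) (y : ℕ → N) (n : ℕ) :
    posConv f x y (n + 1) = ∑ p ∈ antidiagonal n, f (x p.1) (y p.2) := rfl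

theorem posConv_add (f g : M →ₗ[R] N →ₗ[R] P) (x : ℕ → M) (y : ℕ → N) :
    posConv (f + g) x y = posConv f x y + posConv g x y := by
  funext n; cases n <;> simp [sum_add_distrib]

theorem posConv_flip (f : M →ₗ[R] N →ₗ[R] P) (x : ℕ → M) (y : ℕ → N) :
    posConv f.flip y x = posConv f x y := by
  funext n
  cases n with
  | zero => rfl
  | succ n => simpa using (Nat.sum_antidiagonal_swap (f := fun p => f (x p.1) (y p.2)))

theorem posConv_posConv {f₁ : M →ₗ[R] N →ₗ[R] P} {f₂ : P →ₗ[R] Q →ₗ[R] T}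
    {g₁ : N →ₗ[R] Q →ₗ[R] U} {g₂ : M →ₗ[R] U →ₗ[R] T}
    (h : ∀ a b c, f₂ (f₁ a b) c = g₂ a (g₁ b c)) (x : ℕ → M) (y : ℕ → N) (z : ℕ → Q) :
    posConv f₂ (posConv f₁ x y) z = posConv g₂ x (posConv g₁ y z) := by
  funext n
  rcases n with _ | _ | n
  · rfl
  · simp
  · rw [posConv_apply_succ, posConv_apply_succ, Nat.sum_antidiagonal_succ,
      Nat.sum_antidiagonal_succ']
    simp only [posConv_apply_succ, posConv_apply_zero, map_zero, LinearMap.zero_apply, zero_add,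
      map_sum, LinearMap.sum_apply, h]
    exact Nat.sum_antidiagonal_antidiagonal_assoc n
      fun i j l => g₂ (x i) (g₁ (y j) (z l))

theorem posConv_apply_eq_zero_of_lt (f : M →ₗ[R] N →ₗ[R] P) {x : ℕ → M} {y : ℕ → N} {i j : ℕ}
    (hx : ∀ n < i, x n = 0) (hy : ∀ n < j, y n = 0) {n : ℕ} (hn : n < i + j + 1) :
    posConv f x y n = 0 := by
  cases n with
  | zero => rfl
  | succ n =>
    rw [posConv_apply_succ]
    refine sum_eq_zero fun p hp => ?_
    rw [HasAntidiagonal.mem_antidiagonal] at hp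
    rcases lt_or_ge p.1 i with h | h
    · simp [hx _ h]
    · simp [hy p.2 (by omega)]

theorem eq_zero_of_eq_posConv_add_posConv (f : M →ₗ[R] N →ₗ[R] N) (g : N →ₗ[R] P →ₗ[R] N)
    (a : ℕ → M) (b : ℕ → P) {W : ℕ → N} (hW : W = posConv f a W + posConv g W b) : W = 0 := by
  have hvanish : ∀ m, ∀ n < m, W n = 0 := by
    intro m
    induction m with
    | zero => simp
    | succ m ih =>
      intro n hn
      rw [hW, Pi.add_apply, posConv_apply_eq_zero_of_lt f (i := 0) (by simp) ih (by omega),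
        posConv_apply_eq_zero_of_lt g (j := 0) ih (by simp) (by omega), add_zero]
  funext n
  exact hvanish (n + 1) n n.lt_succ_self

variable (f : M →ₗ[R] N →ₗ[R] N) (a : ℕ → M) {p : ℕ → ℕ → N}

theorem apply_eq_zero_of_lt_of_eq_posConv (hp : ∀ m, p (m + 1) = posConv f a (p m)) :
    ∀ m, ∀ n < m, p m n = 0 := by
  intro m
  induction m with
  | zero => simp
  | succ m ih =>
    intro n hn
    rw [hp]
    exact posConv_apply_eq_zero_of_lt f (i := 0) (by simp) ih (by omega)

theorem sum_iterates_eq_add_posConv (hp : ∀ m, p (m + 1) = posConv f a (p m)) :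
    (fun n => ∑ m ∈ range (n + 1), p m n) =
      p 0 + posConv f a (fun n => ∑ m ∈ range (n + 1), p m n) := by
  funext n
  cases n with
  | zero => simp
  | succ n =>
    have htrunc : ∀ q ∈ antidiagonal n,
        ∑ m ∈ range (q.2 + 1), p m q.2 = ∑ m ∈ range (n + 1), p m q.2 := fun q hq => by
      rw [HasAntidiagonal.mem_antidiagonal] at hq
      exact sum_subset (range_subset_range.2 (by omega)) fun m _ hm =>
        apply_eq_zero_of_lt_of_eq_posConv f a hp m q.2 (by simpa using hm)
    calc ∑ m ∈ range (n + 2), p m (n + 1)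
        = p 0 (n + 1) + ∑ m ∈ range (n + 1), ∑ q ∈ antidiagonal n, f (a q.1) (p m q.2) := by
          rw [sum_range_succ', add_comm]
          simp only [hp, posConv_apply_succ]
      _ = p 0 (n + 1) + ∑ q ∈ antidiagonal n, f (a q.1) (∑ m ∈ range (q.2 + 1), p m q.2) := by
          rw [sum_comm]
          exact congrArg _ (sum_congr rfl fun q hq => by rw [htrunc q hq, map_sum])

end PosConv

instance : ShuffleAlgebra k (ℕ → D) where
  prec := posConv ShuffleAlgebra.prec
  succ := posConv ShuffleAlgebra.succ
  prec_prec a b c := by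
    rw [posConv_posConv (g₁ := ShuffleAlgebra.prec + ShuffleAlgebra.succ)
      (fun a b c => ShuffleAlgebra.prec_prec (k := k) a b c), posConv_add]
  succ_prec a b c := posConv_posConv (fun a b c => ShuffleAlgebra.succ_prec (k := k) a b c) a b c
  succ_succ a b c := by
    rw [← posConv_add, posConv_posConv (g₁ := ShuffleAlgebra.succ)
      (fun a b c => (ShuffleAlgebra.succ_succ (k := k) a b c).symm)]

theorem cprec_eq_hsPrec (x y : ℕ → D) : cprec k x y = hsPrec k x y := by
  funext n; cases n <;> rfl

theorem csucc_eq_hsSucc (x y : ℕ → D) : csucc k x y = hsSucc k x y := by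
  funext n; cases n <;> rfl

theorem csh_eq_hsShuffle (x y : ℕ → D) : csh k x y = hsShuffle k x y := by
  rw [csh, hsShuffle, cprec_eq_hsPrec, csucc_eq_hsSucc]

section ShuffleAlgebra

variable {A : Type*} [AddCommGroup A] [Module k A] [ShuffleAlgebra k A] {x X Y : A}

theorem hsShuffle_eq_neg_add_of_eq (hX : X = x + hsPrec k x X) (hY : Y = -x - hsSucc k Y x) :
    hsShuffle k Y X = -(X + Y) := by
  have hxX : hsPrec k x X = X - x := by nth_rewrite 2 [hX]; abel
  have hYx : hsSucc k Y x = -x - Y := by nth_rewrite 2 [hY]; abel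
  have hYX : hsPrec k Y X = -hsPrec k x X - hsSucc k Y (hsPrec k x X) := by
    conv_lhs => rw [hY]
    simp only [hsPrec, hsSucc, map_sub, map_neg, LinearMap.sub_apply, LinearMap.neg_apply,
      ShuffleAlgebra.succ_prec]
  rw [hsShuffle, hYX, hxX]
  simp only [hsSucc, map_sub] at hYx ⊢
  rw [hYx]
  abel

theorem add_add_hsShuffle_eq_of_eq (hX : X = x + hsPrec k x X) (hY : Y = -x - hsSucc k Y x) :
    X + Y + hsShuffle k X Y =
      hsPrec k x (X + Y + hsShuffle k X Y) - hsSucc k (X + Y + hsShuffle k X Y) x := by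
  have hxX : hsPrec k x X = X - x := by nth_rewrite 2 [hX]; abel
  have hYx : hsSucc k Y x = -x - Y := by nth_rewrite 2 [hY]; abel
  have hXY : hsPrec k X Y = hsPrec k x Y + hsPrec k x (hsShuffle k X Y) := by
    conv_lhs => rw [hX]
    simp only [hsPrec, hsSucc, hsShuffle, map_add, LinearMap.add_apply, ShuffleAlgebra.prec_prec]
  have hXY' : hsSucc k X Y = -hsSucc k X x - hsSucc k (hsShuffle k X Y) x := by
    conv_lhs => rw [hY]
    simp only [hsPrec, hsSucc, hsShuffle, map_sub, map_neg, ShuffleAlgebra.succ_succ]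
  have hS : hsShuffle k X Y = hsPrec k x Y + hsPrec k x (hsShuffle k X Y) - hsSucc k X x
      - hsSucc k (hsShuffle k X Y) x :=
    calc hsShuffle k X Y = hsPrec k X Y + hsSucc k X Y := rfl
      _ = _ := by rw [hXY, hXY']; abel
  generalize hsShuffle k X Y = S at hS ⊢
  simp only [hsPrec, hsSucc, map_add, LinearMap.add_apply] at hxX hYx hS ⊢
  rw [hxX, hYx]
  nth_rewrite 1 [hS]
  abel

end ShuffleAlgebra

theorem eq_zero_of_eq_hsPrec_sub_hsSucc {x W : ℕ → D} (hW : W = hsPrec k x W - hsSucc k W x) :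
    W = 0 := by
  refine eq_zero_of_eq_posConv_add_posConv (ShuffleAlgebra.prec (k := k))
    (ShuffleAlgebra.succ (k := k)) x (-x) ?_
  rw [map_neg, ← sub_eq_add_neg]
  exact hW

theorem expPrec_snd_eq (x : ℕ → D) : (expPrec k x).2 = x + hsPrec k x (expPrec k x).2 :=
  sum_iterates_eq_add_posConv _ x fun m => cprec_eq_hsPrec k x (precPow k x m)

theorem expSucc_snd_eq (x : ℕ → D) : (expSucc k x).2 = x + hsSucc k (expSucc k x).2 x := by
  have h := sum_iterates_eq_add_posConv (ShuffleAlgebra.succ (k := k)).flip x (p := succPow k x)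
    fun m => (csucc_eq_hsSucc k _ _).trans (posConv_flip _ _ _).symm
  exact h.trans (congrArg _ (posConv_flip _ _ _))

theorem ush_eq_uone {X Y : k × (ℕ → D)} (hX : X.1 = 1) (hY : Y.1 = 1)
    (h : X.2 + Y.2 + hsShuffle k X.2 Y.2 = 0) : ush k X Y = uone k := by
  refine Prod.ext (by simp [ush, uone, hX, hY]) ?_
  simpa [ush, uone, hX, hY, csh_eq_hsShuffle, add_comm X.2] using h

/-- in a graded connected unital shuffle algebra, for `x` of positive
degree, `Y := exp^≻(−x)` and `X := exp^≺(x)` satisfy `Y ⧢ X = X ⧢ Y = 1`;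
in particular `Y` is the shuffle-inverse of `X`. -/
theorem expSucc_neg_shuffle_inverse_expPrec (x : ℕ → D) :
    ush k (expSucc k (-x)) (expPrec k x) = uone k ∧
      ush k (expPrec k x) (expSucc k (-x)) = uone k := by
  have hX := expPrec_snd_eq k x
  have hY : (expSucc k (-x)).2 = -x - hsSucc k (expSucc k (-x)).2 x := by
    simpa [hsSucc, sub_eq_add_neg] using expSucc_snd_eq k (-x)
  exact ⟨ush_eq_uone k rfl rfl (by rw [hsShuffle_eq_neg_add_of_eq k hX hY]; abel),
    ush_eq_uone k rfl rfl (eq_zero_of_eq_hsPrec_sub_hsSucc k (add_add_hsShuffle_eq_of_eq k hX hY))⟩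
end

section
/- In a graded connected unital shuffle algebra, if X = 1 + a ≺ X is the solution of the left half-shuffle fixed point equation for a of positive degree, then a = (X − 1) ≺ X^{−1}, where X^{−1} is the shuffle-inverse of X. Analogously, if Z = 1 + Z ≻ b then b = Z^{−1} ≻ (Z − 1). -/
variable (k : Type*) {D : Type*} [Field k] [AddCommGroup D] [Module k D] [ShuffleAlgebra k D]

/-!
Both identities are consequences of the unital dendriform relations
`(a ≺ X) ≺ Y = a ≺ (X ⧢ Y)` and `Y ≻ (X ≻ b) = (Y ⧢ X) ≻ b`: for instance
`(X − 1) ≺ X⁻¹ = (a ≺ X) ≺ X⁻¹ = a ≺ (X ⧢ X⁻¹) = a ≺ 1 = a`.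
On formal series these relations reduce, degree by degree, to the axioms of `D`, because the
half-shuffles of series are shifted Cauchy convolutions and such convolutions are associative
whenever the underlying bilinear maps are.
-/

open Finset.HasAntidiagonal

theorem Finset.Nat.sum_antidiagonal_antidiagonal_fst_eq_snd {M : Type*} [AddCommMonoid M]
    (f : ℕ → ℕ → ℕ → M) (n : ℕ) :
    ∑ p ∈ antidiagonal n, ∑ q ∈ antidiagonal p.1, f q.1 q.2 p.2 =
      ∑ p ∈ antidiagonal n, ∑ q ∈ antidiagonal p.2, f p.1 q.1 q.2 := by
  rw [Finset.sum_sigma', Finset.sum_sigma']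
  refine Finset.sum_nbij' (fun x => ⟨(x.2.1, x.2.2 + x.1.2), (x.2.2, x.1.2)⟩)
    (fun x => ⟨(x.1.1 + x.2.1, x.2.2), (x.1.1, x.2.1)⟩) ?_ ?_ ?_ ?_ ?_
  all_goals
    rintro ⟨⟨i, j⟩, ⟨l, m⟩⟩ h
    simp only [Finset.mem_sigma, Finset.HasAntidiagonal.mem_antidiagonal] at h
    obtain ⟨rfl, rfl⟩ := h
    simp [add_assoc]

section ShiftedConvolution

variable {R M : Type*} [CommSemiring R] [AddCommMonoid M] [Module R M]

/-- The product of the series `Σ xₙ t^{n+1}` and `Σ yₙ t^{n+1}` through the bilinear map `B`: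
the coefficient of `t^{n+2}` is `Σ_{i+j=n} B xᵢ yⱼ`. -/
def shiftedConv (B : M →ₗ[R] M →ₗ[R] M) : (ℕ → M) →ₗ[R] (ℕ → M) →ₗ[R] (ℕ → M) :=
  LinearMap.mk₂ R
    (fun x y n => match n with
      | 0 => 0
      | n + 1 => ∑ p ∈ antidiagonal n, B (x p.1) (y p.2))
    (fun x x' y => by funext n; cases n <;> simp [Finset.sum_add_distrib])
    (fun c x y => by funext n; cases n <;> simp [Finset.smul_sum])
    (fun x y y' => by funext n; cases n <;> simp [Finset.sum_add_distrib])
    (fun c x y => by funext n; cases n <;> simp [Finset.smul_sum])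

theorem shiftedConv_apply_zero (B : M →ₗ[R] M →ₗ[R] M) (x y : ℕ → M) :
    shiftedConv B x y 0 = 0 := rfl

theorem shiftedConv_apply_succ (B : M →ₗ[R] M →ₗ[R] M) (x y : ℕ → M) (n : ℕ) :
    shiftedConv B x y (n + 1) = ∑ p ∈ antidiagonal n, B (x p.1) (y p.2) := rfl

theorem shiftedConv_add_apply (B B' : M →ₗ[R] M →ₗ[R] M) (x y : ℕ → M) :
    shiftedConv (B + B') x y = shiftedConv B x y + shiftedConv B' x y := by
  funext n
  cases n <;> simp [shiftedConv_apply_zero, shiftedConv_apply_succ, Finset.sum_add_distrib]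

theorem shiftedConv_assoc {B₁ B₂ B₃ B₄ : M →ₗ[R] M →ₗ[R] M}
    (h : ∀ a b c, B₁ (B₂ a b) c = B₃ a (B₄ b c)) (x y z : ℕ → M) :
    shiftedConv B₁ (shiftedConv B₂ x y) z = shiftedConv B₃ x (shiftedConv B₄ y z) := by
  funext n
  match n with
  | 0 => rfl
  | 1 => simp [shiftedConv_apply_succ, shiftedConv_apply_zero]
  | n + 2 =>
    -- the terms involving the vanishing coefficient `shiftedConv _ _ _ 0` drop out
    rw [shiftedConv_apply_succ, shiftedConv_apply_succ, Finset.Nat.sum_antidiagonal_succ,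
      Finset.Nat.sum_antidiagonal_succ']
    simp only [shiftedConv_apply_zero, map_zero, LinearMap.zero_apply, zero_add,
      shiftedConv_apply_succ, map_sum, LinearMap.sum_apply]
    rw [Finset.Nat.sum_antidiagonal_antidiagonal_fst_eq_snd
      (fun i j l => B₁ (B₂ (x i) (y j)) (z l))]
    simp only [h]

end ShiftedConvolution

theorem cprec_eq_shiftedConv (x y : ℕ → D) :
    cprec k x y = shiftedConv (ShuffleAlgebra.prec (k := k)) x y := by
  funext n; cases n <;> rfl

theorem csucc_eq_shiftedConv (x y : ℕ → D) :
    csucc k x y = shiftedConv (ShuffleAlgebra.succ (k := k)) x y := by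
  funext n; cases n <;> rfl

theorem csh_eq_shiftedConv (x y : ℕ → D) :
    csh k x y = shiftedConv (ShuffleAlgebra.prec (k := k) + ShuffleAlgebra.succ (k := k)) x y := by
  rw [csh, cprec_eq_shiftedConv, csucc_eq_shiftedConv, shiftedConv_add_apply]

theorem cprec_cprec (a x y : ℕ → D) : cprec k (cprec k a x) y = cprec k a (csh k x y) := by
  simp only [cprec_eq_shiftedConv, csh_eq_shiftedConv]
  exact shiftedConv_assoc (fun a b c => ShuffleAlgebra.prec_prec a b c) a x y

theorem csucc_csucc (x y b : ℕ → D) : csucc k x (csucc k y b) = csucc k (csh k x y) b := by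
  simp only [csucc_eq_shiftedConv, csh_eq_shiftedConv]
  exact (shiftedConv_assoc (fun a b c => (ShuffleAlgebra.succ_succ a b c).symm) x y b).symm

theorem uprec_uprec (a : ℕ → D) (X Y : k × (ℕ → D)) :
    uprec k (uprec k a X) Y = uprec k a (ush k X Y) := by
  simp only [uprec, ush, cprec_eq_shiftedConv, map_add, map_smul, LinearMap.add_apply,
    LinearMap.smul_apply]
  simp only [← cprec_eq_shiftedConv, cprec_cprec]
  module

theorem usucc_usucc (b : ℕ → D) (X Y : k × (ℕ → D)) :
    usucc k Y (usucc k X b) = usucc k (ush k Y X) b := by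
  simp only [usucc, ush, csucc_eq_shiftedConv, map_add, map_smul, LinearMap.add_apply,
    LinearMap.smul_apply]
  simp only [← csucc_eq_shiftedConv, csucc_csucc]
  module

theorem uprec_uone (a : ℕ → D) : uprec k a (uone k) = a := by
  simp [uprec, uone, cprec_eq_shiftedConv]

theorem usucc_uone (b : ℕ → D) : usucc k (uone k) b = b := by
  simp [usucc, uone, csucc_eq_shiftedConv]

omit [Module k D] [ShuffleAlgebra k D] in
theorem snd_sub_uone_of_eq_uone_add_uinj {X : k × (ℕ → D)} {y : ℕ → D}
    (h : X = uone k + uinj k y) : (X - uone k).2 = y := by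
  subst h; simp [uone, uinj]

/-- in a graded connected unital shuffle algebra, if `X = 1 + a ≺ X`
then `a = (X − 1) ≺ X⁻¹`, where `X⁻¹` is the shuffle-inverse of `X`; analogously,
if `Z = 1 + Z ≻ b` then `b = Z⁻¹ ≻ (Z − 1)`. -/
theorem halfshuffle_logarithm_of_fixed_point :
    (∀ (a : ℕ → D) (X Xinv : k × (ℕ → D)),
        X = uone k + uinj k (uprec k a X) →
        ush k X Xinv = uone k → ush k Xinv X = uone k →
        a = uprec k (X - uone k).2 Xinv) ∧
    (∀ (b : ℕ → D) (Z Zinv : k × (ℕ → D)),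
        Z = uone k + uinj k (usucc k Z b) →
        ush k Z Zinv = uone k → ush k Zinv Z = uone k →
        b = usucc k Zinv (Z - uone k).2) := by
  constructor
  · intro a X Xinv hX hXXinv _
    rw [snd_sub_uone_of_eq_uone_add_uinj k hX, uprec_uprec, hXXinv, uprec_uone]
  · intro b Z Zinv hZ _ hZinvZ
    rw [snd_sub_uone_of_eq_uone_add_uinj k hZ, usucc_usucc, hZinvZ, usucc_uone]
end
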